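/- The inequality Σ_{i=1}^d x_i ≤ b, where b = Σ_{i=1}^d θ_i, defines a facet of the grlex polytope P. -/

import Mathlib

/-!
Every generator `x ≼_grlex θ` has degree `∑ xᵢ ≤ ∑ θᵢ = b`, and `θ` itself attains `b`, so the
inequality is valid and cuts out an exposed face `F`. As `0 ∈ P` lies off the hyperplane
`∑ xᵢ = b`, the face `F` has codimension one as soon as it spans `ℝᵈ` linearly. It does: besides
`θ` it contains `b·eᵢ` for every `i < d`, which is grlex-below `θ` because its last coordinate
vanishes while `θ_d ≥ 1`.
-/

open Set Finset

/-- A polytope: convex hull of finitely many points. -/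
def IsPolytope {n : ℕ} (X : Set (Fin n → ℝ)) : Prop :=
  ∃ V : Finset (Fin n → ℝ), X = convexHull ℝ (V : Set (Fin n → ℝ))

/-- Affine dimension of a set. -/
noncomputable def adim {n : ℕ} (S : Set (Fin n → ℝ)) : ℕ :=
  Module.finrank ℝ (vectorSpan ℝ S)

/-- `F` is a facet of `X`: an exposed face of affine dimension one less than `X`. -/
def IsFacet {n : ℕ} (X F : Set (Fin n → ℝ)) : Prop :=
  IsExposed ℝ X F ∧ adim F + 1 = adim X

/-- Two vertices of `X` are adjacent if the segment joining them is an exposed face. -/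
def AdjVert {n : ℕ} (X : Set (Fin n → ℝ)) (u v : Fin n → ℝ) : Prop :=
  u ≠ v ∧ u ∈ X.extremePoints ℝ ∧ v ∈ X.extremePoints ℝ ∧
    IsExposed ℝ X (segment ℝ u v)

/-- The convex cone generated by a set: all nonnegative multiples of convex combinations. -/
def coneHull {n : ℕ} (S : Set (Fin n → ℝ)) : Set (Fin n → ℝ) :=
  {0} ∪ {p | ∃ c : ℝ, 0 ≤ c ∧ ∃ z ∈ convexHull ℝ S, p = c • z}

/-- The tangent cone of `X` at a vertex `v`:
`v + cone{x - v : x an adjacent vertex of v}`. -/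
def tangentCone {n : ℕ} (X : Set (Fin n → ℝ)) (v : Fin n → ℝ) : Set (Fin n → ℝ) :=
  {p | ∃ y ∈ coneHull {z | ∃ x, AdjVert X v x ∧ z = x - v}, p = v + y}

/-- The graph (1-skeleton) of a polytope `X`, with the vertices of `X` as nodes. -/
def polyGraph {n : ℕ} (X : Set (Fin n → ℝ)) : SimpleGraph (Fin n → ℝ) where
  Adj := AdjVert X
  symm := by
    refine ⟨fun u v h => ?_⟩
    refine ⟨h.1.symm, h.2.2.1, h.2.1, ?_⟩
    rw [segment_symm]; exact h.2.2.2
  loopless := ⟨fun u h => h.1 rfl⟩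

/-- Real point corresponding to an integer point. -/
def toR {d : ℕ} (x : Fin d → ℤ) : Fin d → ℝ := fun i => (x i : ℝ)

/-- Lexicographic order comparing from the last coordinate. -/
def lexLe {d : ℕ} (x y : Fin d → ℤ) : Prop :=
  x = y ∨ ∃ i : Fin d, x i < y i ∧ ∀ k : Fin d, i < k → x k = y k

/-- Graded lexicographic order. -/
def grlexLe {d : ℕ} (x y : Fin d → ℤ) : Prop :=
  (∑ i, x i) < (∑ i, y i) ∨ ((∑ i, x i) = (∑ i, y i) ∧ lexLe x y)

/-- Graded reverse lexicographic order. -/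
def grevlexLe {d : ℕ} (x y : Fin d → ℤ) : Prop :=
  (∑ i, x i) < (∑ i, y i) ∨ ((∑ i, x i) = (∑ i, y i) ∧ lexLe y x)

/-- The grlex polytope `P = conv{x ∈ ℤᵈ : 0 ≤ x ≼_grlex θ}`. -/
def grlexP (d : ℕ) (θ : Fin d → ℤ) : Set (Fin d → ℝ) :=
  convexHull ℝ {p | ∃ x : Fin d → ℤ, (∀ i, 0 ≤ x i) ∧ grlexLe x θ ∧ p = toR x}

/-- The grevlex polytope `Q = conv{x ∈ ℤᵈ : 0 ≤ x ≼_grevlex θ}`. -/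
def grevlexQ (d : ℕ) (θ : Fin d → ℤ) : Set (Fin d → ℝ) :=
  convexHull ℝ {p | ∃ x : Fin d → ℤ, (∀ i, 0 ≤ x i) ∧ grevlexLe x θ ∧ p = toR x}

/-- `b`, the total sum of `θ`. -/
def bsum {d : ℕ} (θ : Fin d → ℤ) : ℤ := ∑ i, θ i

/-- `b̃ₖ`, the sum of the first `k` coordinates of `θ` (`k` is 1-indexed). -/
def btil {d : ℕ} (θ : Fin d → ℤ) (k : ℕ) : ℤ :=
  ∑ i ∈ Finset.univ.filter (fun i : Fin d => (i : ℕ) < k), θ i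

/-- The vertex `w = (b-1)e_d` of `P`. -/
def wP (d : ℕ) (θ : Fin d → ℤ) : Fin d → ℤ :=
  fun i => if (i : ℕ) = d - 1 then bsum θ - 1 else 0

/-- The vertex `u^k = ((b̃_{k-1}+1)e_{k-1}, θ_k - 1, θ_{k+1}, …, θ_d)` of `P` (paper's
1-indexing: coordinate `j` of the paper is index `j-1` here). -/
def uP (d : ℕ) (θ : Fin d → ℤ) (k : ℕ) : Fin d → ℤ :=
  fun i => if (i : ℕ) = k - 2 then btil θ (k - 1) + 1
    else if (i : ℕ) = k - 1 then θ i - 1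
    else if k ≤ (i : ℕ) then θ i else 0

/-- The vertex `v^{j,k} = (b̃_k e_j, 0, …, 0, θ_{k+1}, …, θ_d)` of `P` (1-indexed). -/
def vP (d : ℕ) (θ : Fin d → ℤ) (j k : ℕ) : Fin d → ℤ :=
  fun i => if (i : ℕ) = j - 1 then btil θ k
    else if k ≤ (i : ℕ) then θ i else 0

/-- The point `b·e_j` (1-indexed `j`). -/
def beP (d : ℕ) (θ : Fin d → ℤ) (j : ℕ) : Fin d → ℤ :=
  fun i => if (i : ℕ) = j - 1 then bsum θ else 0

/-- The vertex `u^k = (b̃_{k-1}e_{k-1}, θ_k, …, θ_d)` of `Q` (1-indexed, `2 ≤ k ≤ d+1`). -/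
def uQ (d : ℕ) (θ : Fin d → ℤ) (k : ℕ) : Fin d → ℤ :=
  fun i => if (i : ℕ) = k - 2 then btil θ (k - 1)
    else if k - 1 ≤ (i : ℕ) then θ i else 0

/-- The vertex `v^{j,k} = ((b̃_{k-1}-1)e_j, 0, …, 0, θ_k + 1, θ_{k+1}, …, θ_d)` of `Q`. -/
def vQ (d : ℕ) (θ : Fin d → ℤ) (j k : ℕ) : Fin d → ℤ :=
  fun i => if (i : ℕ) = j - 1 then btil θ (k - 1) - 1
    else if (i : ℕ) = k - 1 then θ i + 1
    else if k ≤ (i : ℕ) then θ i else 0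

/-- Edge boundary of a vertex set in a graph. -/
def eboundary {V : Type*} (G : SimpleGraph V) (S : Set V) : Set (V × V) :=
  {p | G.Adj p.1 p.2 ∧ p.1 ∈ S ∧ p.2 ∉ S}

theorem isExposed_inter_eq_of_forall_le {E : Type*} [AddCommGroup E] [Module ℝ E]
    [TopologicalSpace E] {X : Set E} (l : StrongDual ℝ E) {c : ℝ} (hle : ∀ x ∈ X, l x ≤ c) :
    IsExposed ℝ X (X ∩ {x | l x = c}) := by
  rintro ⟨x₀, hx₀X, hx₀c⟩
  refine ⟨l, Set.ext fun x => ⟨fun ⟨hxX, hxc⟩ => ⟨hxX, fun y hy => ?_⟩, fun ⟨hxX, hmax⟩ => ?_⟩⟩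
  · exact (hle y hy).trans_eq hxc.symm
  · exact ⟨hxX, le_antisymm (hle x hxX) (hx₀c.symm.trans_le (hmax x₀ hx₀X))⟩

theorem vectorSpan_insert_zero (k : Type*) {V : Type*} [Ring k] [AddCommGroup V] [Module k V]
    (s : Set V) : vectorSpan k (insert 0 s) = Submodule.span k s := by
  rw [vectorSpan_eq_span_vsub_set_right k (Set.mem_insert 0 s)]
  simp

theorem vectorSpan_le_ker_of_forall_eq {k V : Type*} [Ring k] [AddCommGroup V] [Module k V]
    {s : Set V} (l : V →ₗ[k] k) {c : k} (hs : ∀ x ∈ s, l x = c) :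
    vectorSpan k s ≤ LinearMap.ker l := by
  rw [vectorSpan_def, Submodule.span_le]
  rintro _ ⟨x, hx, y, hy, rfl⟩
  simp [hs x hx, hs y hy]

theorem isFacet_inter_eq_of_forall_le {n : ℕ} {X : Set (Fin n → ℝ)}
    (l : StrongDual ℝ (Fin n → ℝ)) (hl : l ≠ 0) {c : ℝ} (hle : ∀ x ∈ X, l x ≤ c)
    (h0 : (0 : Fin n → ℝ) ∈ X) (hspan : Submodule.span ℝ (X ∩ {x | l x = c}) = ⊤) :
    IsFacet X (X ∩ {x | l x = c}) := by
  set F := X ∩ {x | l x = c}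
  have hl' : (l : (Fin n → ℝ) →ₗ[ℝ] ℝ) ≠ 0 := by
    rwa [Ne, ← ContinuousLinearMap.toLinearMap_zero, ContinuousLinearMap.coe_inj]
  have hF_le : adim F + 1 ≤ n := calc
    adim F + 1 ≤ Module.finrank ℝ (LinearMap.ker (l : (Fin n → ℝ) →ₗ[ℝ] ℝ)) + 1 := by
      gcongr
      exact Submodule.finrank_mono (vectorSpan_le_ker_of_forall_eq _ fun x hx => hx.2)
    _ = n := by rw [Module.Dual.finrank_ker_add_one_of_ne_zero hl', Module.finrank_fin_fun]
  have hF_ge : n ≤ adim F + 1 := by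
    have := finrank_vectorSpan_insert_le_set ℝ F 0
    rwa [vectorSpan_insert_zero, hspan, finrank_top, Module.finrank_fin_fun] at this
  have hX : adim X = n := by
    have : vectorSpan ℝ (insert 0 F) ≤ vectorSpan ℝ X :=
      vectorSpan_mono ℝ (Set.insert_subset h0 Set.inter_subset_left)
    rw [vectorSpan_insert_zero, hspan, top_le_iff] at this
    rw [adim, this, finrank_top, Module.finrank_fin_fun]
  exact ⟨isExposed_inter_eq_of_forall_le l hle, by omega⟩

theorem Submodule.single_one_mem_of_forall_ne {K ι : Type*} [Field K] [Fintype ι] [DecidableEq ι]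
    {S : Submodule K (ι → K)} {i : ι} (hS : ∀ j ≠ i, Pi.single j 1 ∈ S) {v : ι → K}
    (hv : v ∈ S) (hvi : v i ≠ 0) : Pi.single i 1 ∈ S := by
  have hdecomp : v = ∑ j, v j • Pi.single j 1 := by
    ext k
    simp [Pi.single_apply]
  rw [hdecomp, ← Finset.add_sum_erase _ _ (Finset.mem_univ i)] at hv
  have hrest : ∑ j ∈ Finset.univ.erase i, v j • Pi.single j 1 ∈ S :=
    S.sum_mem fun j hj => S.smul_mem _ (hS j (Finset.ne_of_mem_erase hj))
  have hvi_mem : v i • Pi.single i 1 ∈ S := (S.add_mem_iff_left hrest).1 hv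
  simpa [hvi] using S.smul_mem (v i)⁻¹ hvi_mem

theorem Submodule.eq_top_of_forall_single_one_mem {K ι : Type*} [Field K] [Fintype ι]
    [DecidableEq ι] {S : Submodule K (ι → K)} (hS : ∀ i, Pi.single i 1 ∈ S) : S = ⊤ := by
  rw [eq_top_iff, ← (Pi.basisFun K ι).span_eq, Submodule.span_le]
  rintro _ ⟨i, rfl⟩
  simpa using hS i

noncomputable def coordSum (n : ℕ) : StrongDual ℝ (Fin n → ℝ) := ∑ i, ContinuousLinearMap.proj i

@[simp] theorem coordSum_apply {n : ℕ} (x : Fin n → ℝ) : coordSum n x = ∑ i, x i := by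
  simp [coordSum]

theorem coordSum_ne_zero (m : ℕ) : coordSum (m + 1) ≠ 0 := fun h => by
  simpa using congrArg (· (Pi.single 0 1)) h

theorem toR_single {d : ℕ} (i : Fin d) (a : ℤ) : toR (Pi.single i a) = Pi.single i (a : ℝ) := by
  ext k
  by_cases hk : k = i
  · subst hk; simp [toR]
  · simp [toR, hk]

theorem grlexLe.sum_le {d : ℕ} {x y : Fin d → ℤ} (h : grlexLe x y) : ∑ i, x i ≤ ∑ i, y i :=
  h.elim le_of_lt fun h => h.1.le

theorem grlexLe_refl {d : ℕ} (x : Fin d → ℤ) : grlexLe x x :=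
  Or.inr ⟨rfl, Or.inl rfl⟩

theorem grlexLe_single_bsum {m : ℕ} {θ : Fin (m + 1) → ℤ} {i : Fin (m + 1)}
    (hi : i ≠ Fin.last m) (hlast : 0 < θ (Fin.last m)) : grlexLe (Pi.single i (bsum θ)) θ := by
  refine Or.inr ⟨by simp [bsum], Or.inr ⟨Fin.last m, ?_, fun k hk => ?_⟩⟩
  · simpa [Pi.single_apply, hi.symm] using hlast
  · exact absurd hk (Fin.le_last k).not_gt

theorem bsum_pos {m : ℕ} {θ : Fin (m + 1) → ℤ} (hθ : ∀ i, 0 ≤ θ i)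
    (hlast : 0 < θ (Fin.last m)) : 0 < bsum θ :=
  hlast.trans_le (Finset.single_le_sum (fun i _ => hθ i) (Finset.mem_univ _))

theorem toR_mem_grlexP {d : ℕ} {θ x : Fin d → ℤ} (hx : ∀ i, 0 ≤ x i) (hxθ : grlexLe x θ) :
    toR x ∈ grlexP d θ :=
  subset_convexHull ℝ _ ⟨x, hx, hxθ, rfl⟩

theorem zero_mem_grlexP {d : ℕ} {θ : Fin d → ℤ} (hb : 0 < bsum θ) :
    (0 : Fin d → ℝ) ∈ grlexP d θ := by
  have h0 : toR (0 : Fin d → ℤ) = 0 := by ext; simp [toR]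
  rw [← h0]
  exact toR_mem_grlexP (fun _ => le_rfl) (Or.inl (by simpa [bsum] using hb))

theorem sum_le_bsum_of_mem_grlexP {d : ℕ} {θ : Fin d → ℤ} :
    ∀ x ∈ grlexP d θ, ∑ i, x i ≤ (bsum θ : ℝ) := by
  have hgen : {p | ∃ x, (∀ i, 0 ≤ x i) ∧ grlexLe x θ ∧ p = toR x} ⊆
      {p : Fin d → ℝ | coordSum d p ≤ bsum θ} := by
    rintro _ ⟨y, -, hyθ, rfl⟩
    simpa [toR, bsum] using (Int.cast_le (R := ℝ)).2 hyθ.sum_le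
  exact fun x hx => by simpa using convexHull_min hgen (convex_halfSpace_le
    (coordSum d : (Fin d → ℝ) →ₗ[ℝ] ℝ).isLinear (bsum θ : ℝ)) hx

theorem span_grlexP_inter_eq_top {m : ℕ} {θ : Fin (m + 1) → ℤ} (hθ : ∀ i, 0 ≤ θ i)
    (hlast : 0 < θ (Fin.last m)) :
    Submodule.span ℝ (grlexP (m + 1) θ ∩ {x | ∑ i, x i = (bsum θ : ℝ)}) = ⊤ := by
  set S := Submodule.span ℝ (grlexP (m + 1) θ ∩ {x | ∑ i, x i = (bsum θ : ℝ)})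
  have hb := bsum_pos hθ hlast
  have hθS : toR θ ∈ S := Submodule.subset_span
    ⟨toR_mem_grlexP hθ (grlexLe_refl θ), by simp [toR, bsum]⟩
  have hsingle : ∀ i ≠ Fin.last m, Pi.single i 1 ∈ S := by
    intro i hi
    have hbe : toR (Pi.single i (bsum θ)) ∈ S := Submodule.subset_span
      ⟨toR_mem_grlexP (fun k => by by_cases hk : k = i <;> simp [hk, hb.le])
        (grlexLe_single_bsum hi hlast), by simp [toR_single]⟩
    rw [toR_single] at hbe
    simpa [← Pi.single_smul, hb.ne'] using S.smul_mem ((bsum θ : ℝ)⁻¹) hbe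
  refine Submodule.eq_top_of_forall_single_one_mem fun i => ?_
  by_cases hi : i = Fin.last m
  · subst hi
    exact Submodule.single_one_mem_of_forall_ne hsingle hθS (by simpa [toR] using hlast.ne')
  · exact hsingle i hi

/-- The inequality `∑ x_i ≤ b` is valid for the grlex polytope `P` and
defines a facet of `P`. -/
theorem grlexP_grading_facet (d : ℕ) (hd : 3 ≤ d) (θ : Fin d → ℤ) (hθ : ∀ i, 1 ≤ θ i) :
    (∀ x ∈ grlexP d θ, ∑ i, x i ≤ (bsum θ : ℝ)) ∧
      IsFacet (grlexP d θ) (grlexP d θ ∩ {x | ∑ i, x i = (bsum θ : ℝ)}) := by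
  obtain ⟨m, rfl⟩ : ∃ m, d = m + 1 := ⟨d - 1, by omega⟩
  have hθ0 : ∀ i, 0 ≤ θ i := fun i => zero_le_one.trans (hθ i)
  have hlast : 0 < θ (Fin.last m) := hθ (Fin.last m)
  refine ⟨sum_le_bsum_of_mem_grlexP, ?_⟩
  simpa using isFacet_inter_eq_of_forall_le (coordSum (m + 1)) (coordSum_ne_zero m)
    (by simpa using sum_le_bsum_of_mem_grlexP) (zero_mem_grlexP (bsum_pos hθ0 hlast))
    (by simpa using span_grlexP_inter_eq_top hθ0 hlast)
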